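/- Let R be a commutative ring, w ∈ R, and E = (E⁻¹, E⁰, φ⁻¹, φ⁰) a factorization of w. Let G be the contractible factorization G = (E⁻¹, E⁻¹, w • id_{E⁻¹}, id_{E⁻¹}), i.e. with components G⁻¹ = E⁻¹, G⁰ = E⁻¹ and structure maps w • id_{E⁻¹} and id_{E⁻¹}. Regard ker φ⁰ and coker φ⁰ as factorizations with zero structure maps, concentrated in component 0. Let f : ker φ⁰ → G have f⁻¹ = 0 and f⁰ the inclusion ker φ⁰ ⊆ E⁻¹; let g : G → E have g⁻¹ = id_{E⁻¹} and g⁰ = φ⁰; let h : E → coker φ⁰ have h⁻¹ = 0 and h⁰ the projection E⁰ → coker φ⁰. Then 0 → ker φ⁰ → G → E → coker φ⁰ → 0 (with maps f, g, h) is an exact sequence of factorizations, i.e. each componentwise sequence of R-modules is exact. -/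
import Mathlib


/-- The exact sequence `0 → ker φ⁰ → G → E → coker φ⁰ → 0` of factorizations,
where `G = (E⁻¹, E⁻¹, w•id, id)`, `f = (0, incl)`, `g = (id, φ⁰)`, `h = (0, π)`. -/
theorem stmt_6 {R : Type} [CommRing R] (w : R)
    {Em E0 : Type}
    [AddCommGroup Em] [Module R Em] [AddCommGroup E0] [Module R E0]
    (φEm : E0 →ₗ[R] Em) (φE0 : Em →ₗ[R] E0)
    (hE1 : φE0 ∘ₗ φEm = w • (LinearMap.id : E0 →ₗ[R] E0))
    (hE2 : φEm ∘ₗ φE0 = w • (LinearMap.id : Em →ₗ[R] Em)) :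
    -- w acts by zero on ker φ⁰ and coker φ⁰ (so they are factorizations with
    -- zero structure maps)
    (∀ x ∈ LinearMap.ker φE0, w • x = 0) ∧
    (∀ y : E0, w • y ∈ LinearMap.range φE0) ∧
    -- f : ker φ⁰ → G is a morphism of factorizations (f⁻¹ = 0, f⁰ = incl):
    ((w • (LinearMap.id : Em →ₗ[R] Em)) ∘ₗ (LinearMap.ker φE0).subtype = 0) ∧
    -- g : G → E is a morphism of factorizations (g⁻¹ = id, g⁰ = φ⁰):
    ((LinearMap.id : Em →ₗ[R] Em) ∘ₗ (w • (LinearMap.id : Em →ₗ[R] Em))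
      = φEm ∘ₗ φE0) ∧
    (φE0 ∘ₗ (LinearMap.id : Em →ₗ[R] Em)
      = φE0 ∘ₗ (LinearMap.id : Em →ₗ[R] Em)) ∧
    -- h : E → coker φ⁰ is a morphism of factorizations (h⁻¹ = 0, h⁰ = π):
    ((LinearMap.range φE0).mkQ ∘ₗ φE0 = 0) ∧
    -- exactness of the degree 0 component sequence
    Function.Injective (LinearMap.ker φE0).subtype ∧
    LinearMap.range (LinearMap.ker φE0).subtype = LinearMap.ker φE0 ∧
    LinearMap.range φE0 = LinearMap.ker (LinearMap.range φE0).mkQ ∧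
    Function.Surjective (LinearMap.range φE0).mkQ ∧
    -- exactness of the degree -1 component sequence 0 → E⁻¹ →id E⁻¹ → 0
    Function.Bijective (LinearMap.id : Em →ₗ[R] Em) := by
  refine ⟨?_, ?_, ?_, ?_, rfl, ?_, ?_, ?_, ?_, ?_, ?_⟩
  · intro x hx
    have := congrArg (fun f => f x) hE2
    simp only [LinearMap.comp_apply, LinearMap.smul_apply, LinearMap.id_apply] at this
    rw [LinearMap.mem_ker] at hx
    rw [← this, hx, map_zero]
  · intro y
    have := congrArg (fun f => f y) hE1
    simp only [LinearMap.comp_apply, LinearMap.smul_apply, LinearMap.id_apply] at this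
    exact ⟨φEm y, this⟩
  · ext ⟨x, hx⟩
    have := congrArg (fun f => f x) hE2
    simp only [LinearMap.comp_apply, LinearMap.smul_apply, LinearMap.id_apply] at this
    rw [LinearMap.mem_ker] at hx
    simp [← this, hx]
  · rw [hE2]; ext x; simp
  · ext x; simp
  · exact Subtype.val_injective
  · exact (LinearMap.ker φE0).range_subtype
  · rw [Submodule.ker_mkQ]
  · exact (LinearMap.range φE0).mkQ_surjective
  · exact ⟨fun a b h => h, fun a => ⟨a, rfl⟩⟩
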